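/- arXiv:cs/0504110 — 9 statements merged into one kernel-verified Lean document; each statement's English description precedes it below -/
import Mathlib

section
/- For all integers M, N ≥ 2, the set S_{M,N} of separable states on ℂ^M ⊗ ℂ^N is not a polytope: there is no finite set T of Hermitian (MN)×(MN) complex matrices whose convex hull equals S_{M,N}. -/
/-
A pure product state `P = vvᴴ` is an exposed point of the separable states: the real linear
functional `A ↦ Re (vᴴ A v)` equals `|⟨v, w⟩|² ≤ 1` on every pure product state `wwᴴ`, with
equality (the equality case of Cauchy–Schwarz) only if `wwᴴ = vvᴴ`. The set of points where a
linear functional is smaller than at `P`, together with `P` itself, is convex, so it contains the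
separable states, and `P` is an extreme point of it. Extreme points of the convex hull of a
finite set `T` lie in `T`, while there are infinitely many pure product states.
-/

open Matrix
open scoped Kronecker

noncomputable section

/-- `x` is a unit vector in `ℂ^d`. -/
def isUnitVec {d : ℕ} (x : Fin d → ℂ) : Prop := ∑ i, ‖x i‖ ^ 2 = 1

/-- The rank-one projector `x xᴴ`. -/
def outer {d : ℕ} (x : Fin d → ℂ) : Matrix (Fin d) (Fin d) ℂ :=
  Matrix.vecMulVec x (star x)

/-- The set of pure product states `(x xᴴ) ⊗ (y yᴴ)` for unit vectors `x, y`. -/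
def pureProduct (M N : ℕ) : Set (Matrix (Fin M × Fin N) (Fin M × Fin N) ℂ) :=
  {σ | ∃ x : Fin M → ℂ, ∃ y : Fin N → ℂ,
    isUnitVec x ∧ isUnitVec y ∧ σ = outer x ⊗ₖ outer y}

/-- The set of separable states: the convex hull (over ℝ) of the pure product states. -/
def SepStates (M N : ℕ) : Set (Matrix (Fin M × Fin N) (Fin M × Fin N) ℂ) :=
  convexHull ℝ (pureProduct M N)

open WithLp

section Convex

variable {𝕜 E : Type*} [Field 𝕜] [LinearOrder 𝕜] [IsStrictOrderedRing 𝕜] [AddCommGroup E]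
  [Module 𝕜 E]

lemma Convex.combo_lt_of_lt_of_le {a b u v c : 𝕜} (ha : 0 < a) (hb : 0 ≤ b) (hab : a + b = 1)
    (hu : u < c) (hv : v ≤ c) : a * u + b * v < c := by
  linear_combination mul_lt_mul_of_pos_left hu ha + mul_le_mul_of_nonneg_left hv hb + c * hab

lemma LinearMap.convex_setOf_lt_or_eq (f : E →ₗ[𝕜] 𝕜) (p : E) :
    Convex 𝕜 {x | f x < f p ∨ x = p} := by
  rw [convex_iff_openSegment_subset]
  rintro x hx y hy _ ⟨a, b, ha, hb, hab, rfl⟩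
  by_cases hxy : x = p ∧ y = p
  · obtain ⟨rfl, rfl⟩ := hxy
    exact Or.inr (Convex.combo_self hab _)
  have hx' : f x ≤ f p := hx.elim le_of_lt fun h => h ▸ le_rfl
  have hy' : f y ≤ f p := hy.elim le_of_lt fun h => h ▸ le_rfl
  left
  simp only [map_add, map_smul, smul_eq_mul]
  rcases not_and_or.1 hxy with hxp | hyp
  · exact Convex.combo_lt_of_lt_of_le ha hb.le hab (hx.resolve_right hxp) hy'
  · rw [add_comm] at hab ⊢
    exact Convex.combo_lt_of_lt_of_le hb ha.le hab (hy.resolve_right hyp) hx'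

lemma mem_extremePoints_convexHull_of_lt (f : E →ₗ[𝕜] 𝕜) {P : Set E} {p : E} (hp : p ∈ P)
    (hlt : ∀ x ∈ P, x ≠ p → f x < f p) : p ∈ (convexHull 𝕜 P).extremePoints 𝕜 := by
  have hsub : convexHull 𝕜 P ⊆ {x | f x < f p ∨ x = p} :=
    convexHull_min (fun x hx => (eq_or_ne x p).symm.imp_left (hlt x hx))
      (f.convex_setOf_lt_or_eq p)
  refine inter_extremePoints_subset_extremePoints_of_subset hsub
    ⟨subset_convexHull 𝕜 P hp, Or.inr rfl, fun x₁ hx₁ x₂ hx₂ ⟨a, b, ha, hb, hab, hcombo⟩ => ?_⟩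
  refine hx₁.resolve_left fun hlt₁ => lt_irrefl (f p) ?_
  have hx₂' : f x₂ ≤ f p := hx₂.elim le_of_lt fun h => h ▸ le_rfl
  calc f p = a * f x₁ + b * f x₂ := by rw [← hcombo]; simp
    _ < f p := Convex.combo_lt_of_lt_of_le ha hb.le hab hlt₁ hx₂'

end Convex

section RankOne

variable {𝕜 : Type*} [RCLike 𝕜]

lemma exists_norm_eq_one_smul_of_norm_inner_eq_one {E : Type*} [NormedAddCommGroup E]
    [InnerProductSpace 𝕜 E] {x y : E} (hx : ‖x‖ = 1) (hy : ‖y‖ = 1)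
    (h : ‖inner 𝕜 x y‖ = 1) : ∃ r : 𝕜, ‖r‖ = 1 ∧ y = r • x := by
  have hx₀ : x ≠ 0 := norm_ne_zero_iff.1 (by simp [hx])
  have hy₀ : y ≠ 0 := norm_ne_zero_iff.1 (by simp [hy])
  obtain ⟨r, -, rfl⟩ := (norm_inner_eq_norm_iff hx₀ hy₀).1 (by rw [h, hx, hy, one_mul])
  exact ⟨r, by simpa [norm_smul, hx] using hy, rfl⟩

lemma vecMulVec_smul_star_smul {I : Type*} {r : 𝕜} (hr : ‖r‖ = 1) (u : I → 𝕜) :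
    vecMulVec (r • u) (star (r • u)) = vecMulVec u (star u) := by
  rw [star_smul, smul_vecMulVec, vecMulVec_smul, smul_smul, RCLike.star_def, RCLike.mul_conj,
    hr]
  simp

variable {I : Type*} [Fintype I]

def reQuadForm (u : I → 𝕜) : Matrix I I 𝕜 →ₗ[ℝ] ℝ where
  toFun A := RCLike.re (star u ⬝ᵥ A *ᵥ u)
  map_add' A B := by simp [add_mulVec]
  map_smul' r A := by simp [smul_mulVec, RCLike.smul_re]

lemma reQuadForm_vecMulVec (u v : I → 𝕜) :
    reQuadForm u (vecMulVec v (star v)) = ‖inner 𝕜 (toLp 2 u) (toLp 2 v)‖ ^ 2 := by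
  have h : star u ⬝ᵥ vecMulVec v (star v) *ᵥ u =
      inner 𝕜 (toLp 2 u) (toLp 2 v) * star (inner 𝕜 (toLp 2 u) (toLp 2 v)) := by
    rw [vecMulVec_mulVec, op_smul_eq_smul, dotProduct_smul, smul_eq_mul,
      EuclideanSpace.inner_toLp_toLp, mul_comm, star_dotProduct v u, dotProduct_comm (star u) v]
  rw [reQuadForm, LinearMap.coe_mk, AddHom.coe_mk, h, RCLike.star_def, RCLike.mul_conj]
  norm_cast

lemma reQuadForm_vecMulVec_self {u : I → 𝕜} (hu : ‖toLp 2 u‖ = 1) :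
    reQuadForm u (vecMulVec u (star u)) = 1 := by
  rw [reQuadForm_vecMulVec, inner_self_eq_norm_sq_to_K, hu]
  simp

lemma reQuadForm_vecMulVec_lt_one {u v : I → 𝕜} (hu : ‖toLp 2 u‖ = 1) (hv : ‖toLp 2 v‖ = 1)
    (hne : vecMulVec v (star v) ≠ vecMulVec u (star u)) :
    reQuadForm u (vecMulVec v (star v)) < 1 := by
  rw [reQuadForm_vecMulVec]
  have hle : ‖inner 𝕜 (toLp 2 u) (toLp 2 v)‖ ≤ 1 := by
    simpa [hu, hv] using norm_inner_le_norm (𝕜 := 𝕜) (toLp 2 u) (toLp 2 v)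
  have hne_one : ‖inner 𝕜 (toLp 2 u) (toLp 2 v)‖ ≠ 1 := fun h => by
    obtain ⟨r, hr, hvr⟩ := exists_norm_eq_one_smul_of_norm_inner_eq_one hu hv h
    rw [← toLp_smul, (toLp_injective 2).eq_iff] at hvr
    exact hne (hvr ▸ vecMulVec_smul_star_smul hr u)
  exact pow_lt_one₀ (norm_nonneg _) (hle.lt_of_ne hne_one) two_ne_zero

end RankOne

section ProdVec

variable {R I J : Type*}

def prodVec [Mul R] (x : I → R) (y : J → R) : I × J → R := fun p => x p.1 * y p.2

lemma star_prodVec [CommSemiring R] [StarRing R] (x : I → R) (y : J → R) :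
    star (prodVec x y) = prodVec (star x) (star y) := by
  ext p; simp [prodVec]

lemma vecMulVec_kronecker_vecMulVec [CommSemiring R] (a b : I → R) (c d : J → R) :
    vecMulVec a b ⊗ₖ vecMulVec c d = vecMulVec (prodVec a c) (prodVec b d) := by
  ext p q; simp only [kroneckerMap_apply, vecMulVec_apply, prodVec]; ring

lemma norm_toLp_prodVec {𝕜 : Type*} [RCLike 𝕜] [Fintype I] [Fintype J] (x : I → 𝕜)
    (y : J → 𝕜) : ‖toLp 2 (prodVec x y)‖ = ‖toLp 2 x‖ * ‖toLp 2 y‖ := by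
  rw [← sq_eq_sq₀ (norm_nonneg _) (by positivity), mul_pow, EuclideanSpace.norm_sq_eq,
    EuclideanSpace.norm_sq_eq, EuclideanSpace.norm_sq_eq, Finset.sum_mul_sum,
    ← Finset.univ_product_univ, Finset.sum_product]
  simp [prodVec, norm_mul, mul_pow]

end ProdVec

lemma isUnitVec_iff_norm_toLp {d : ℕ} (x : Fin d → ℂ) : isUnitVec x ↔ ‖toLp 2 x‖ = 1 := by
  rw [isUnitVec, ← pow_left_inj₀ (norm_nonneg _) zero_le_one two_ne_zero, one_pow,
    EuclideanSpace.norm_sq_eq]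

lemma outer_kronecker_outer {M N : ℕ} (x : Fin M → ℂ) (y : Fin N → ℂ) :
    outer x ⊗ₖ outer y = vecMulVec (prodVec x y) (star (prodVec x y)) := by
  rw [outer, outer, vecMulVec_kronecker_vecMulVec, star_prodVec]

lemma pureProduct_subset_extremePoints (M N : ℕ) :
    pureProduct M N ⊆ (SepStates M N).extremePoints ℝ := by
  have hunit {x : Fin M → ℂ} {y : Fin N → ℂ} (hx : isUnitVec x) (hy : isUnitVec y) :
      ‖toLp 2 (prodVec x y)‖ = 1 := by
    rw [norm_toLp_prodVec, (isUnitVec_iff_norm_toLp x).1 hx, (isUnitVec_iff_norm_toLp y).1 hy,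
      one_mul]
  rintro _ ⟨x, y, hx, hy, rfl⟩
  refine mem_extremePoints_convexHull_of_lt (reQuadForm (prodVec x y)) ⟨x, y, hx, hy, rfl⟩ ?_
  rintro _ ⟨x', y', hx', hy', rfl⟩ hne
  simp only [outer_kronecker_outer] at hne ⊢
  rw [reQuadForm_vecMulVec_self (hunit hx hy)]
  exact reQuadForm_vecMulVec_lt_one (hunit hx hy) (hunit hx' hy') hne

lemma exists_isUnitVec_norm_sq_eq (m : ℕ) {s : ℝ} (hs₀ : 0 ≤ s) (hs₁ : s ≤ 1) :
    ∃ x : Fin (m + 2) → ℂ, isUnitVec x ∧ ‖x 0‖ ^ 2 = s := by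
  refine ⟨Fin.cons (√s : ℂ) (Fin.cons (√(1 - s) : ℂ) 0), ?_, ?_⟩
  · simp [isUnitVec, Fin.sum_univ_succ, Real.sq_sqrt hs₀, Real.sq_sqrt (sub_nonneg.2 hs₁)]
  · simp [Real.sq_sqrt hs₀]

lemma pureProduct_infinite {M N : ℕ} (hM : 2 ≤ M) (hN : 1 ≤ N) :
    (pureProduct M N).Infinite := by
  obtain ⟨m, rfl⟩ := Nat.exists_eq_add_of_le' hM
  obtain ⟨n, rfl⟩ := Nat.exists_eq_add_of_le' hN
  have hy : isUnitVec (Pi.single 0 1 : Fin (n + 1) → ℂ) := by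
    simp [isUnitVec, Pi.single_apply, apply_ite]
  refine ((Set.Icc_infinite (zero_lt_one' ℝ)).mono ?_).of_image
    fun σ : Matrix _ _ ℂ => (σ (0, 0) (0, 0)).re
  rintro s ⟨hs₀, hs₁⟩
  obtain ⟨x, hx, rfl⟩ := exists_isUnitVec_norm_sq_eq m hs₀ hs₁
  refine ⟨_, ⟨x, _, hx, hy, rfl⟩, ?_⟩
  simp [outer, vecMulVec_apply, Complex.mul_conj']
  norm_cast

/-- The set of separable states is not a polytope: it is not the convex hull of any
finite set of Hermitian matrices. -/
theorem sep_not_polytope (M N : ℕ) (hM : 2 ≤ M) (hN : 2 ≤ N) :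
    ¬ ∃ T : Finset (Matrix (Fin M × Fin N) (Fin M × Fin N) ℂ),
        (∀ A ∈ T, A.IsHermitian) ∧
        convexHull ℝ (↑T : Set (Matrix (Fin M × Fin N) (Fin M × Fin N) ℂ)) = SepStates M N := by
  rintro ⟨T, -, hT⟩
  have hsub : pureProduct M N ⊆ T := fun σ hσ => by
    have hext := pureProduct_subset_extremePoints M N hσ
    rw [← hT] at hext
    exact extremePoints_convexHull_subset hext
  exact pureProduct_infinite hM (by omega) (T.finite_toSet.subset hsub)

end
end

section
/- Let O be a Hermitian d×d complex matrix and let α ∈ ℝ satisfy 0 < α ≤ 1. If tr(O²) = α² and tr(O³) = α³, then tr(O) = α and rank(O) = 1 (i.e., O corresponds to an unnormalised pure state). -/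
open Matrix

private lemma real_aux (n : ℕ) (f : Fin n → ℝ) (α : ℝ) (hα0 : 0 < α)
    (h2 : ∑ i, f i ^ 2 = α ^ 2) (h3 : ∑ i, f i ^ 3 = α ^ 3) :
    (∑ i, f i = α) ∧ (Finset.univ.filter (fun i => f i ≠ 0)).card = 1 := by
  classical
  have hbound : ∀ i, |f i| ≤ α := by
    intro i
    have h1 : f i ^ 2 ≤ α ^ 2 := by
      rw [← h2]
      exact Finset.single_le_sum (fun j _ => sq_nonneg (f j)) (Finset.mem_univ i)
    nlinarith [abs_nonneg (f i), sq_abs (f i)]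
  have hterm : ∀ i ∈ Finset.univ, f i ^ 3 ≤ α * f i ^ 2 := by
    intro i _
    have := hbound i
    nlinarith [abs_nonneg (f i), sq_abs (f i), neg_abs_le (f i), le_abs_self (f i)]
  have hsum : ∑ i, f i ^ 3 = ∑ i, α * f i ^ 2 := by
    rw [h3, ← Finset.mul_sum, h2]; ring
  have heq : ∀ i ∈ Finset.univ, f i ^ 3 = α * f i ^ 2 :=
    (Finset.sum_eq_sum_iff_of_le hterm).mp hsum
  have hcases : ∀ i, f i = 0 ∨ f i = α := by
    intro i
    have h := heq i (Finset.mem_univ i)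
    rcases eq_or_ne (f i) 0 with h0 | h0
    · exact Or.inl h0
    · right
      have hsq : f i ^ 2 ≠ 0 := pow_ne_zero 2 h0
      have : f i ^ 2 * (f i - α) = 0 := by linear_combination h
      rcases mul_eq_zero.mp this with h' | h'
      · exact absurd h' hsq
      · linarith
  set S := Finset.univ.filter (fun i : Fin n => f i ≠ 0) with hS
  have hfS : ∀ i, f i = if i ∈ S then α else 0 := by
    intro i
    by_cases hi : i ∈ S
    · simp only [hi, if_true]
      rcases hcases i with h | h
      · exact absurd h (by simpa [hS] using hi)
      · exact h
    · simp only [hi, if_false]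
      by_contra h
      exact hi (by simp [hS, h])
  have hcard : (S.card : ℝ) * α ^ 2 = α ^ 2 := by
    have h := h2
    have hrw : ∑ i, f i ^ 2 = ∑ i, (if i ∈ S then α ^ 2 else 0) := by
      apply Finset.sum_congr rfl
      intro i _
      rw [hfS i]
      split <;> simp
    rw [hrw, Finset.sum_ite_mem, Finset.univ_inter, Finset.sum_const, nsmul_eq_mul] at h
    exact h
  have hcard1 : S.card = 1 := by
    have hα2 : α ^ 2 ≠ 0 := pow_ne_zero 2 (ne_of_gt hα0)
    have : (S.card : ℝ) = 1 :=
      mul_right_cancel₀ hα2 (by rw [one_mul]; exact hcard)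
    exact_mod_cast this
  constructor
  · have : ∑ i, f i = ∑ i, (if i ∈ S then α else 0) :=
      Finset.sum_congr rfl (fun i _ => hfS i)
    rw [this, Finset.sum_ite_mem, Finset.univ_inter, Finset.sum_const, nsmul_eq_mul,
      hcard1]
    simp
  · exact hcard1

/-- If a Hermitian matrix `O` satisfies `tr(O²) = α²` and `tr(O³) = α³` for some real
`0 < α ≤ 1`, then `tr(O) = α` and `O` has rank 1 (an unnormalised pure state). -/
theorem herm_trace_sq_cube_implies_rank_one (d : ℕ)
    (O : Matrix (Fin d) (Fin d) ℂ) (hO : O.IsHermitian)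
    (α : ℝ) (hα0 : 0 < α) (hα1 : α ≤ 1)
    (h2 : (O * O).trace = (α : ℂ) ^ 2) (h3 : (O * O * O).trace = (α : ℂ) ^ 3) :
    O.trace = (α : ℂ) ∧ O.rank = 1 := by
  classical
  set U : Matrix (Fin d) (Fin d) ℂ := (hO.eigenvectorUnitary : Matrix (Fin d) (Fin d) ℂ)
    with hU
  set D : Matrix (Fin d) (Fin d) ℂ :=
    diagonal (RCLike.ofReal ∘ hO.eigenvalues) with hD
  have hUU : U * star U = 1 := (Matrix.mem_unitaryGroup_iff).mp hO.eigenvectorUnitary.2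
  have hsUU : star U * U = 1 := (Matrix.mem_unitaryGroup_iff').mp hO.eigenvectorUnitary.2
  have hspec : O = U * D * star U := hO.spectral_theorem
  have htr1 : O.trace = ∑ i, (hO.eigenvalues i : ℂ) := by
    conv_lhs => rw [hspec]
    rw [Matrix.trace_mul_cycle, hsUU, one_mul, Matrix.trace_diagonal]
    rfl
  have htr2 : (O * O).trace = ∑ i, (hO.eigenvalues i : ℂ) ^ 2 := by
    conv_lhs => rw [hspec]
    have key2 : U * D * star U * (U * D * star U) = U * (D * D) * star U := by
      calc U * D * star U * (U * D * star U)
          = U * D * ((star U * U) * (D * star U)) := by simp only [mul_assoc]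
        _ = U * (D * D) * star U := by rw [hsUU, one_mul]; simp only [mul_assoc]
    rw [key2, Matrix.trace_mul_cycle, hsUU, one_mul,
      Matrix.diagonal_mul_diagonal, Matrix.trace_diagonal]
    simp [sq]
  have htr3 : (O * O * O).trace = ∑ i, (hO.eigenvalues i : ℂ) ^ 3 := by
    conv_lhs => rw [hspec]
    have key2 : U * D * star U * (U * D * star U) = U * (D * D) * star U := by
      calc U * D * star U * (U * D * star U)
          = U * D * ((star U * U) * (D * star U)) := by simp only [mul_assoc]
        _ = U * (D * D) * star U := by rw [hsUU, one_mul]; simp only [mul_assoc]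
    have key3 : U * D * star U * (U * D * star U) * (U * D * star U)
        = U * (D * D * D) * star U := by
      rw [key2]
      calc U * (D * D) * star U * (U * D * star U)
          = U * (D * D) * ((star U * U) * (D * star U)) := by simp only [mul_assoc]
        _ = U * (D * D * D) * star U := by rw [hsUU, one_mul]; simp only [mul_assoc]
    rw [key3, Matrix.trace_mul_cycle, hsUU, one_mul,
      Matrix.diagonal_mul_diagonal, Matrix.diagonal_mul_diagonal, Matrix.trace_diagonal]
    simp [pow_succ, sq, mul_assoc]
  have h2' : ∑ i, hO.eigenvalues i ^ 2 = α ^ 2 := by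
    have := h2; rw [htr2] at this; exact_mod_cast this
  have h3' : ∑ i, hO.eigenvalues i ^ 3 = α ^ 3 := by
    have := h3; rw [htr3] at this; exact_mod_cast this
  obtain ⟨hsum, hcard⟩ := real_aux d hO.eigenvalues α hα0 h2' h3'
  constructor
  · rw [htr1]
    exact_mod_cast congrArg (Complex.ofReal) hsum
  · rw [hO.rank_eq_card_non_zero_eigs, Fintype.card_subtype]
    exact hcard
end

section
/- Let M, N ≥ 2 be integers and n := M²N². Let σ = Σ_{i=1}^{n} p_i (α_i α_iᴴ) ⊗ (β_i β_iᴴ), where p_i ≥ 0 with Σ_{i=1}^{n} p_i = 1 and α_i ∈ ℂ^M, β_i ∈ ℂ^N are unit vectors. Let p̃_i, α̃_i, β̃_i be p-bit truncations of p_i, α_i, β_i, and set σ̃ := Σ_{i=1}^{n} p̃_i (α̃_i α̃_iᴴ) ⊗ (β̃_i β̃_iᴴ). Then ‖σ − σ̃‖₂ < M³N³ · 2^{−(p−7.5)}. -/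
open Matrix
open scoped Kronecker

noncomputable section

/-- `x'` is a `p`-bit truncation of the real number `x`. -/
def IsTruncR (p : ℕ) (x x' : ℝ) : Prop := |x'| ≤ |x| ∧ |x - x'| < (2 : ℝ) ^ (-(p : ℤ))

/-- `z'` is a `p`-bit truncation of the complex number `z` (real and imaginary parts are
truncated separately). -/
def IsTruncC (p : ℕ) (z z' : ℂ) : Prop := IsTruncR p z.re z'.re ∧ IsTruncR p z.im z'.im

/-- `x'` is a coordinatewise `p`-bit truncation of the complex vector `x`. -/
def IsTruncVec {d : ℕ} (p : ℕ) (x x' : Fin d → ℂ) : Prop := ∀ i, IsTruncC p (x i) (x' i)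

/-- The Frobenius (Hilbert–Schmidt) norm `‖X‖₂ = √tr(XᴴX)`. -/
def frob {m : Type*} [Fintype m] (X : Matrix m m ℂ) : ℝ :=
  Real.sqrt (∑ i, ∑ j, ‖X i j‖ ^ 2)

/-!
Every summand difference telescopes as
`w • (A ⊗ B) - w' • (A' ⊗ B') = (w - w') • (A ⊗ B) + w' • ((A - A') ⊗ B + A' ⊗ (B - B'))`,
and `x xᴴ - x' x'ᴴ = (x - x') xᴴ + x' (x - x')ᴴ`. The Frobenius norm is multiplicative on
Kronecker products and `‖x yᴴ‖ ≤ ‖x‖ ‖y‖`; truncation never increases absolute values, so all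
truncated data stay in the unit ball, while `‖x - x'‖ ≤ √(2d) 2⁻ᵖ`. Hence each of the `M²N²`
summands contributes at most `(1 + 2√(2M) + 2√(2N)) 2⁻ᵖ < M N 2^(7.5 - p)`.
-/

open WithLp (toLp)

attribute [local instance] Matrix.frobeniusSeminormedAddCommGroup Matrix.frobeniusNormedSpace

namespace IsTruncC

variable {p : ℕ} {z z' : ℂ}

lemma norm_le (h : IsTruncC p z z') : ‖z'‖ ≤ ‖z‖ := by
  obtain ⟨⟨hre, -⟩, ⟨him, -⟩⟩ := h
  rw [← sq_le_sq₀ (norm_nonneg _) (norm_nonneg _), Complex.sq_norm, Complex.sq_norm,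
    Complex.normSq_apply, Complex.normSq_apply, ← sq, ← sq, ← sq, ← sq]
  exact add_le_add (sq_le_sq.2 hre) (sq_le_sq.2 him)

lemma norm_sub_sq_le (h : IsTruncC p z z') :
    ‖z - z'‖ ^ 2 ≤ 2 * ((2 : ℝ) ^ (-(p : ℤ))) ^ 2 := by
  obtain ⟨⟨-, hre⟩, ⟨-, him⟩⟩ := h
  have hre' := sq_le_sq' (abs_lt.1 hre).1.le (abs_lt.1 hre).2.le
  have him' := sq_le_sq' (abs_lt.1 him).1.le (abs_lt.1 him).2.le
  rw [Complex.sq_norm, Complex.normSq_apply, ← sq, ← sq, Complex.sub_re, Complex.sub_im]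
  linarith

end IsTruncC

namespace IsTruncVec

variable {d p : ℕ} {x x' : Fin d → ℂ}

lemma norm_le (h : IsTruncVec p x x') : ‖toLp 2 x'‖ ≤ ‖toLp 2 x‖ := by
  simp only [EuclideanSpace.norm_eq]
  gcongr with i
  exact (h i).norm_le

lemma norm_sub_le (h : IsTruncVec p x x') :
    ‖toLp 2 (x - x')‖ ≤ √(2 * d) * (2 : ℝ) ^ (-(p : ℤ)) := by
  rw [EuclideanSpace.norm_eq, ← Real.sqrt_sq (by positivity : (0 : ℝ) ≤ 2 ^ (-(p : ℤ))),
    ← Real.sqrt_mul (by positivity)]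
  gcongr
  calc ∑ i, ‖(toLp 2 (x - x')) i‖ ^ 2 ≤ ∑ _i : Fin d, 2 * ((2 : ℝ) ^ (-(p : ℤ))) ^ 2 :=
        Finset.sum_le_sum fun i _ => (h i).norm_sub_sq_le
    _ = 2 * d * ((2 : ℝ) ^ (-(p : ℤ))) ^ 2 := by
      rw [Finset.sum_const, Finset.card_univ, Fintype.card_fin, nsmul_eq_mul]
      ring

end IsTruncVec

lemma isUnitVec.norm_eq_one {d : ℕ} {x : Fin d → ℂ} (hx : isUnitVec x) : ‖toLp 2 x‖ = 1 := by
  rw [EuclideanSpace.norm_eq, ← Real.sqrt_one, ← hx]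

lemma norm_toLp_star {d : ℕ} (x : Fin d → ℂ) : ‖toLp 2 (star x)‖ = ‖toLp 2 x‖ := by
  simp [EuclideanSpace.norm_eq]

section Frobenius

variable {𝕜 : Type*} [RCLike 𝕜] {l m n o : Type*} [Fintype l] [Fintype m] [Fintype n] [Fintype o]

lemma frobenius_norm_eq_sqrt (A : Matrix m n 𝕜) : ‖A‖ = √(∑ i, ∑ j, ‖A i j‖ ^ 2) := by
  rw [frobenius_norm_def, Real.sqrt_eq_rpow]
  norm_num [Real.rpow_two]

lemma norm_vecMulVec_le (x : m → 𝕜) (y : n → 𝕜) :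
    ‖vecMulVec x y‖ ≤ ‖toLp 2 x‖ * ‖toLp 2 y‖ := by
  rw [vecMulVec_eq Unit, ← frobenius_norm_replicateCol (ι := Unit) x,
    ← frobenius_norm_replicateRow (ι := Unit) y]
  exact frobenius_norm_mul _ _

lemma norm_kronecker (A : Matrix l m 𝕜) (B : Matrix n o 𝕜) : ‖A ⊗ₖ B‖ = ‖A‖ * ‖B‖ := by
  rw [frobenius_norm_eq_sqrt, frobenius_norm_eq_sqrt, frobenius_norm_eq_sqrt,
    ← Real.sqrt_mul (by positivity)]
  simp_rw [Fintype.sum_prod_type, kroneckerMap_apply, norm_mul, mul_pow, Finset.sum_mul,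
    Finset.mul_sum]
  exact congrArg _ (Finset.sum_congr rfl fun _ _ => Finset.sum_comm)

end Frobenius

lemma frob_eq_norm {m : Type*} [Fintype m] (X : Matrix m m ℂ) : frob X = ‖X‖ :=
  (frobenius_norm_eq_sqrt X).symm

lemma norm_map₂_sub_map₂_le {R E F G : Type*} [CommSemiring R]
    [SeminormedAddCommGroup E] [SeminormedAddCommGroup F] [SeminormedAddCommGroup G]
    [Module R E] [Module R F] [Module R G]
    (f : E →ₗ[R] F →ₗ[R] G) (hf : ∀ x y, ‖f x y‖ ≤ ‖x‖ * ‖y‖) (x x' : E) (y y' : F) :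
    ‖f x y - f x' y'‖ ≤ ‖x - x'‖ * ‖y‖ + ‖x'‖ * ‖y - y'‖ := by
  have hsplit : f x y - f x' y' = f (x - x') y + f x' (y - y') := by
    simp only [map_sub, LinearMap.sub_apply]
    abel
  rw [hsplit]
  exact (norm_add_le _ _).trans (add_le_add (hf _ _) (hf _ _))

section Outer

variable {d p : ℕ} {x x' : Fin d → ℂ}

lemma norm_outer_le (x : Fin d → ℂ) : ‖outer x‖ ≤ ‖toLp 2 x‖ ^ 2 := by
  simpa [outer, norm_toLp_star, sq] using norm_vecMulVec_le x (star x)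

lemma outer_sub_outer (x x' : Fin d → ℂ) :
    outer x - outer x' = vecMulVec (x - x') (star x) + vecMulVec x' (star (x - x')) := by
  ext i j
  simp only [outer, Matrix.sub_apply, Matrix.add_apply, vecMulVec_apply, Pi.star_apply,
    Pi.sub_apply, star_sub]
  ring

lemma norm_outer_sub_outer_le (x x' : Fin d → ℂ) :
    ‖outer x - outer x'‖ ≤ (‖toLp 2 x‖ + ‖toLp 2 x'‖) * ‖toLp 2 (x - x')‖ := by
  rw [outer_sub_outer]
  calc _ ≤ ‖vecMulVec (x - x') (star x)‖ + ‖vecMulVec x' (star (x - x'))‖ := norm_add_le _ _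
    _ ≤ ‖toLp 2 (x - x')‖ * ‖toLp 2 x‖ + ‖toLp 2 x'‖ * ‖toLp 2 (x - x')‖ := by
      grw [norm_vecMulVec_le, norm_vecMulVec_le, norm_toLp_star, norm_toLp_star]
    _ = _ := by ring

lemma IsTruncVec.norm_outer_le_one (hx : isUnitVec x) (h : IsTruncVec p x x') :
    ‖outer x'‖ ≤ 1 := by
  grw [norm_outer_le, h.norm_le, hx.norm_eq_one, one_pow]

lemma IsTruncVec.norm_outer_sub_outer_le (hx : isUnitVec x) (h : IsTruncVec p x x') :
    ‖outer x - outer x'‖ ≤ 2 * √(2 * d) * (2 : ℝ) ^ (-(p : ℤ)) := by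
  grw [_root_.norm_outer_sub_outer_le, h.norm_le, hx.norm_eq_one, h.norm_sub_le]
  linarith

end Outer

lemma norm_outer_kronecker_outer_sub_le {M N p : ℕ} {α α' : Fin M → ℂ} {β β' : Fin N → ℂ}
    (hα : isUnitVec α) (hβ : isUnitVec β) (htα : IsTruncVec p α α') (htβ : IsTruncVec p β β') :
    ‖outer α ⊗ₖ outer β - outer α' ⊗ₖ outer β'‖ ≤
      2 * (√(2 * M) + √(2 * N)) * (2 : ℝ) ^ (-(p : ℤ)) := by
  have hβ1 : ‖outer β‖ ≤ 1 := by grw [norm_outer_le, hβ.norm_eq_one, one_pow]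
  have hsplit : ‖outer α ⊗ₖ outer β - outer α' ⊗ₖ outer β'‖ ≤
      ‖outer α - outer α'‖ * ‖outer β‖ + ‖outer α'‖ * ‖outer β - outer β'‖ :=
    norm_map₂_sub_map₂_le (kroneckerBilinear (R := ℂ)) (fun A B => (norm_kronecker A B).le)
      (outer α) (outer α') (outer β) (outer β')
  grw [hsplit, htα.norm_outer_sub_outer_le hα, htα.norm_outer_le_one hα, hβ1,
    htβ.norm_outer_sub_outer_le hβ]
  linarith

lemma norm_smul_outer_kronecker_outer_sub_le {M N p : ℕ} {w w' : ℝ} {α α' : Fin M → ℂ}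
    {β β' : Fin N → ℂ} (hw : |w| ≤ 1) (htw : IsTruncR p w w')
    (hα : isUnitVec α) (hβ : isUnitVec β) (htα : IsTruncVec p α α') (htβ : IsTruncVec p β β') :
    ‖(w : ℂ) • (outer α ⊗ₖ outer β) - (w' : ℂ) • (outer α' ⊗ₖ outer β')‖ ≤
      (1 + 2 * (√(2 * M) + √(2 * N))) * (2 : ℝ) ^ (-(p : ℤ)) := by
  have hαβ : ‖outer α ⊗ₖ outer β‖ ≤ 1 := by
    grw [norm_kronecker, norm_outer_le, norm_outer_le, hα.norm_eq_one, hβ.norm_eq_one]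
    norm_num
  have hsplit := norm_map₂_sub_map₂_le
    (LinearMap.lsmul ℂ (Matrix (Fin M × Fin N) (Fin M × Fin N) ℂ)) (fun c X => (norm_smul c X).le)
    (w : ℂ) w' (outer α ⊗ₖ outer β) (outer α' ⊗ₖ outer β')
  simp only [LinearMap.lsmul_apply, ← Complex.ofReal_sub, Complex.norm_real,
    Real.norm_eq_abs] at hsplit
  grw [hsplit, htw.2.le, hαβ, htw.1.trans hw, norm_outer_kronecker_outer_sub_le hα hβ htα htβ]
  linarith

lemma sq_mul_sq_mul_term_bound_lt {M N : ℕ} (hM : 1 ≤ M) (hN : 1 ≤ N) (p : ℕ) :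
    (M : ℝ) ^ 2 * N ^ 2 * ((1 + 2 * (√(2 * M) + √(2 * N))) * (2 : ℝ) ^ (-(p : ℤ))) <
      (M : ℝ) ^ 3 * (N : ℝ) ^ 3 * (2 : ℝ) ^ ((7.5 : ℝ) - (p : ℝ)) := by
  have hM' : (1 : ℝ) ≤ M := by exact_mod_cast hM
  have hN' : (1 : ℝ) ≤ N := by exact_mod_cast hN
  have hsqrt {k : ℝ} (hk : 1 ≤ k) : √(2 * k) ≤ 2 * k :=
    Real.sqrt_le_iff.2 ⟨by positivity, by nlinarith⟩
  have h128 : (128 : ℝ) ≤ 2 ^ (7.5 : ℝ) := by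
    calc (128 : ℝ) = 2 ^ (7 : ℝ) := by norm_num
      _ ≤ 2 ^ (7.5 : ℝ) := Real.rpow_le_rpow_of_exponent_le one_le_two (by norm_num)
  have hcoeff : 1 + 2 * (√(2 * M) + √(2 * N)) < M * N * (2 : ℝ) ^ (7.5 : ℝ) := by
    grw [hsqrt hM', hsqrt hN', ← h128]
    nlinarith [mul_le_mul hM' hN' zero_le_one (by positivity)]
  have h2p : (2 : ℝ) ^ ((7.5 : ℝ) - p) = 2 ^ (7.5 : ℝ) * 2 ^ (-(p : ℤ)) := by
    rw [Real.rpow_sub two_pos, Real.rpow_natCast, _root_.zpow_neg, zpow_natCast, div_eq_mul_inv]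
  rw [h2p]
  calc _ < (M : ℝ) ^ 2 * N ^ 2 * ((M * N * 2 ^ (7.5 : ℝ)) * (2 : ℝ) ^ (-(p : ℤ))) := by gcongr
    _ = _ := by ring

theorem sep_truncation_bound_general (M N p : ℕ) (hM : 2 ≤ M) (hN : 2 ≤ N)
    (w w' : Fin (M ^ 2 * N ^ 2) → ℝ)
    (hw0 : ∀ i, 0 ≤ w i) (hw1 : ∑ i, w i = 1)
    (α α' : Fin (M ^ 2 * N ^ 2) → Fin M → ℂ)
    (β β' : Fin (M ^ 2 * N ^ 2) → Fin N → ℂ)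
    (hαu : ∀ i, isUnitVec (α i)) (hβu : ∀ i, isUnitVec (β i))
    (htw : ∀ i, IsTruncR p (w i) (w' i))
    (htα : ∀ i, IsTruncVec p (α i) (α' i))
    (htβ : ∀ i, IsTruncVec p (β i) (β' i)) :
    frob ((∑ i, (w i : ℂ) • (outer (α i) ⊗ₖ outer (β i))) -
          (∑ i, (w' i : ℂ) • (outer (α' i) ⊗ₖ outer (β' i))))
      < (M : ℝ) ^ 3 * (N : ℝ) ^ 3 * (2 : ℝ) ^ ((7.5 : ℝ) - (p : ℝ)) := by
  have hw_le_one (i) : |w i| ≤ 1 := by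
    rw [abs_of_nonneg (hw0 i), ← hw1]
    exact Finset.single_le_sum (fun j _ => hw0 j) (Finset.mem_univ i)
  rw [frob_eq_norm, ← Finset.sum_sub_distrib]
  calc _ ≤ ∑ i, ‖(w i : ℂ) • (outer (α i) ⊗ₖ outer (β i)) -
          (w' i : ℂ) • (outer (α' i) ⊗ₖ outer (β' i))‖ := norm_sum_le _ _
    _ ≤ ∑ _i : Fin (M ^ 2 * N ^ 2), (1 + 2 * (√(2 * M) + √(2 * N))) * (2 : ℝ) ^ (-(p : ℤ)) :=
      Finset.sum_le_sum fun i _ => norm_smul_outer_kronecker_outer_sub_le (hw_le_one i) (htw i)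
        (hαu i) (hβu i) (htα i) (htβ i)
    _ = (M : ℝ) ^ 2 * N ^ 2 * ((1 + 2 * (√(2 * M) + √(2 * N))) * (2 : ℝ) ^ (-(p : ℤ))) := by
      simp
    _ < _ := sq_mul_sq_mul_term_bound_lt (by omega) (by omega) p

/-- Truncation bound for separable decompositions: if `σ = Σ pᵢ (αᵢαᵢᴴ)⊗(βᵢβᵢᴴ)` and
`σ̃` is built from `p`-bit truncations of the data, then `‖σ − σ̃‖₂ < M³N³·2^{−(p−7.5)}`. -/
theorem sep_truncation_bound (M N p : ℕ) (hM : 2 ≤ M) (hN : 2 ≤ N) (hp : 1 ≤ p)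
    (w w' : Fin (M ^ 2 * N ^ 2) → ℝ)
    (hw0 : ∀ i, 0 ≤ w i) (hw1 : ∑ i, w i = 1)
    (α α' : Fin (M ^ 2 * N ^ 2) → Fin M → ℂ)
    (β β' : Fin (M ^ 2 * N ^ 2) → Fin N → ℂ)
    (hαu : ∀ i, isUnitVec (α i)) (hβu : ∀ i, isUnitVec (β i))
    (htw : ∀ i, IsTruncR p (w i) (w' i))
    (htα : ∀ i, IsTruncVec p (α i) (α' i))
    (htβ : ∀ i, IsTruncVec p (β i) (β' i)) :
    frob ((∑ i, (w i : ℂ) • (outer (α i) ⊗ₖ outer (β i))) -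
          (∑ i, (w' i : ℂ) • (outer (α' i) ⊗ₖ outer (β' i))))
      < (M : ℝ) ^ 3 * (N : ℝ) ^ 3 * (2 : ℝ) ^ ((7.5 : ℝ) - (p : ℝ)) :=
  sep_truncation_bound_general M N p hM hN w w' hw0 hw1 α α' β β' hαu hβu htw htα htβ
end
end

section
/- Let a₁ ∈ ℝⁿ be a unit vector, let s ≥ 0 and R* ∈ ℝ with R* > s². Define D := {x ∈ ℝⁿ : ⟨a₁, x⟩ > s and ‖x‖² < R*} and F(x) := −log(⟨a₁, x⟩ − s) − log(R* − ‖x‖²) for x ∈ D. Then the point ω := ((s + √(s² + 3R*))/3) · a₁ lies in D and is the unique minimizer of F on D; that is, ω is the analytic centre of the region {x : ‖x‖² ≤ R*} ∩ {x : ⟨a₁, x⟩ − s ≥ 0}. -/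
open scoped RealInnerProductSpace

/-- The analytic centre of the region `{x : ‖x‖² ≤ R*} ∩ {x : ⟨a₁, x⟩ ≥ s}` (for a unit
vector `a₁`, `s ≥ 0`, `R* > s²`) is `ω = ((s + √(s² + 3R*))/3)·a₁`: it lies in the
interior of the region and is the unique minimizer of the logarithmic barrier
`F(x) = −log(⟨a₁,x⟩ − s) − log(R* − ‖x‖²)` there. -/
theorem analytic_centre_ball_halfspace (n : ℕ) (hn : 1 ≤ n)
    (a1 : EuclideanSpace ℝ (Fin n)) (ha1 : ‖a1‖ = 1)
    (s R : ℝ) (hs : 0 ≤ s) (hR : s ^ 2 < R)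
    (ω : EuclideanSpace ℝ (Fin n))
    (hωdef : ω = ((s + Real.sqrt (s ^ 2 + 3 * R)) / 3) • a1) :
    (s < ⟪a1, ω⟫ ∧ ‖ω‖ ^ 2 < R) ∧
    ∀ x : EuclideanSpace ℝ (Fin n), s < ⟪a1, x⟫ → ‖x‖ ^ 2 < R → x ≠ ω →
      -Real.log (⟪a1, ω⟫ - s) - Real.log (R - ‖ω‖ ^ 2)
        < -Real.log (⟪a1, x⟫ - s) - Real.log (R - ‖x‖ ^ 2) := by
  have hRpos : 0 < R := lt_of_le_of_lt (sq_nonneg s) hR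
  set q := Real.sqrt (s ^ 2 + 3 * R) with hq_def
  have hq2 : q ^ 2 = s ^ 2 + 3 * R := Real.sq_sqrt (by nlinarith)
  have hq0 : 0 ≤ q := Real.sqrt_nonneg _
  have hq2s : 2 * s < q := by nlinarith
  set c := (s + q) / 3 with hc_def
  have h3c : 3 * c = s + q := by rw [hc_def]; ring
  have hcs : s < c := by linarith
  have hc0 : 0 < c := lt_of_le_of_lt hs hcs
  have hceq : 3 * c ^ 2 - 2 * s * c = R := by
    linear_combination ((3 * c - s + q) / 3) * h3c + (1 / 3) * hq2
  have hcR : c ^ 2 < R := by nlinarith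
  have hωinner : ⟪a1, ω⟫ = c := by
    rw [hωdef, real_inner_smul_right, real_inner_self_eq_norm_sq, ha1]
    ring
  have hωnorm : ‖ω‖ ^ 2 = c ^ 2 := by
    rw [hωdef, norm_smul, ha1, mul_one, Real.norm_eq_abs, sq_abs]
  rw [hωinner, hωnorm]
  refine ⟨⟨hcs, hcR⟩, ?_⟩
  intro x hx1 hx2 hxne
  set t := (⟪a1, x⟫ : ℝ) with ht_def
  have hkey : ‖x - t • a1‖ ^ 2 = ‖x‖ ^ 2 - t ^ 2 := by
    rw [norm_sub_sq_real, real_inner_smul_right, real_inner_comm, ← ht_def,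
      norm_smul, ha1, mul_one, Real.norm_eq_abs, sq_abs]
    ring
  have hts : s < t := hx1
  have ht2 : t ^ 2 ≤ ‖x‖ ^ 2 := by nlinarith [sq_nonneg ‖x - t • a1‖]
  -- the key product inequality
  have hprod : (t - s) * (R - ‖x‖ ^ 2) < (c - s) * (R - c ^ 2) := by
    by_cases hcase : x = t • a1
    · -- then ‖x‖² = t², but t ≠ c
      have hnx : ‖x‖ ^ 2 = t ^ 2 := by
        have : ‖x - t • a1‖ ^ 2 = 0 := by rw [hcase]; simp
        linarith [hkey ▸ this]
      have htc : t ≠ c := by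
        intro h
        apply hxne
        rw [hcase, h, hωdef, hc_def]
      have hsq : 0 < (c - t) ^ 2 := by
        have h0 : c - t ≠ 0 := sub_ne_zero_of_ne (Ne.symm htc)
        positivity
      have hid : (c - s) * (R - c ^ 2) - (t - s) * (R - t ^ 2)
          = (c - t) ^ 2 * (t + 2 * c - s) := by
        linear_combination (t - c) * hceq
      rw [hnx]
      linarith [mul_pos hsq (by linarith : (0:ℝ) < t + 2 * c - s), hid]
    · have hxt : 0 < ‖x - t • a1‖ ^ 2 :=
        pow_pos (norm_pos_iff.mpr (sub_ne_zero_of_ne hcase)) 2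
      have hst : t ^ 2 < ‖x‖ ^ 2 := by linarith [hkey ▸ hxt]
      have hid : (c - s) * (R - c ^ 2) - (t - s) * (R - t ^ 2)
          = (c - t) ^ 2 * (t + 2 * c - s) := by
        linear_combination (t - c) * hceq
      linarith [mul_pos (by linarith : (0:ℝ) < t - s) (by linarith : (0:ℝ) < ‖x‖ ^ 2 - t ^ 2),
        mul_nonneg (sq_nonneg (c - t)) (by linarith : (0:ℝ) ≤ t + 2 * c - s), hid]
  have hposL : 0 < (t - s) * (R - ‖x‖ ^ 2) :=
    mul_pos (by linarith) (by linarith)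
  have hlog := Real.log_lt_log hposL hprod
  rw [Real.log_mul (ne_of_gt (by linarith : (0:ℝ) < t - s))
        (ne_of_gt (by linarith : (0:ℝ) < R - ‖x‖ ^ 2)),
      Real.log_mul (ne_of_gt (by linarith : (0:ℝ) < c - s))
        (ne_of_gt (by linarith : (0:ℝ) < R - c ^ 2))] at hlog
  linarith
end

section
/- Let a₁, …, a_h ∈ ℝⁿ and b₁, …, b_h ∈ ℝ with b_i < 0 for all i. Suppose ω ∈ ℝⁿ satisfies ‖ω‖ < 1, ⟨a_i, ω⟩ > b_i for all i, and the analytic-centre equation Σ_{i=1}^{h} a_i/(⟨a_i, ω⟩ − b_i) = 2ω/(1 − ‖ω‖²). Then 1/(1 − ‖ω‖²) ≤ (h + 2)/2. -/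
open scoped RealInnerProductSpace

/-- Bound on the analytic centre for cuts with negative offsets: if all `bᵢ < 0` and `ω`
satisfies the analytic-centre equation, then `1/(1 − ‖ω‖²) ≤ (h+2)/2`. -/
theorem analytic_centre_norm_bound (n h : ℕ)
    (a : Fin h → EuclideanSpace ℝ (Fin n)) (b : Fin h → ℝ) (hb : ∀ i, b i < 0)
    (ω : EuclideanSpace ℝ (Fin n)) (hω : ‖ω‖ < 1)
    (hωi : ∀ i, b i < ⟪a i, ω⟫)
    (hceq : ∑ i, (⟪a i, ω⟫ - b i)⁻¹ • a i = (2 / (1 - ‖ω‖ ^ 2)) • ω) :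
    1 / (1 - ‖ω‖ ^ 2) ≤ ((h : ℝ) + 2) / 2 := by
  have hd : 0 < 1 - ‖ω‖ ^ 2 := by nlinarith [norm_nonneg ω]
  have key := congrArg (fun v : EuclideanSpace ℝ (Fin n) => ⟪v, ω⟫) hceq
  simp only [sum_inner, inner_smul_left, RCLike.conj_to_real,
    real_inner_self_eq_norm_sq] at key
  have hsum : ∑ i, (⟪a i, ω⟫ - b i)⁻¹ * ⟪a i, ω⟫ ≤ (h : ℝ) := by
    calc ∑ i, (⟪a i, ω⟫ - b i)⁻¹ * ⟪a i, ω⟫ ≤ ∑ _i : Fin h, (1 : ℝ) := by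
          apply Finset.sum_le_sum
          intro i _
          have hpos : 0 < ⟪a i, ω⟫ - b i := sub_pos.mpr (hωi i)
          rw [inv_mul_eq_div, div_le_one hpos]
          linarith [hb i]
      _ = (h : ℝ) := by simp
  rw [key, div_mul_eq_mul_div, div_le_iff₀ hd] at hsum
  rw [div_le_div_iff₀ hd two_pos]
  nlinarith [norm_nonneg ω]
end

section
/- Let h > 31, let a₁, …, a_h ∈ ℝⁿ and b₁, …, b_h ∈ ℝ with b_i < 0 for all i, and suppose ω ∈ ℝⁿ satisfies ‖ω‖ < 1, ⟨a_i, ω⟩ > b_i for all i, and the analytic-centre equation Σ_{i=1}^{h} a_i/(⟨a_i, ω⟩ − b_i) = 2ω/(1 − ‖ω‖²). Define the Hessian quadratic form H(v) := Σ_{i=1}^{h} ⟨a_i, v⟩²/(⟨a_i, ω⟩ − b_i)² + 4⟨ω, v⟩²/(1 − ‖ω‖²)² + 2‖v‖²/(1 − ‖ω‖²). Then every x ∈ ℝⁿ with ‖x‖ ≤ 1 and ⟨a_i, x⟩ ≥ b_i for all i satisfies H(x − ω) ≤ 14·h²; that is, the search region P is contained in the Hessian ellipsoid E(∇²F(ω),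 ω, √14·h). -/
/-!
Write `s_i(y) = ⟪a_i, y⟫ - b_i`, `A = 1 - ‖ω‖²`, `v = x - ω` and let `S = ∑ s_i(x) / s_i(ω)`, a sum
of `h` nonnegative ratios. Pairing the centre equation with `v` gives `A (S - h) = 2⟪ω, v⟫`, so all
three parts of `H(v)` are controlled by `S`: the linear part is `∑ (s_i(x) / s_i(ω) - 1)²`, at most
`S² - 2S + h`; the rank-one part is exactly `(S - h)²`; and `‖x‖ ≤ 1` gives `‖v‖² ≤ A (1 - (S - h))`,
which also forces `S ≤ h + 1`. On `0 ≤ S ≤ h + 1` the resulting quadratic in `S` is at most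
`(h + 1)(h + 2)`, and this is at most `14 h²` once `h ≥ 1`.
-/

open scoped RealInnerProductSpace

namespace AnalyticCentre

variable {E ι : Type*} [NormedAddCommGroup E] [InnerProductSpace ℝ E]

def slack (a : ι → E) (b : ι → ℝ) (y : E) (i : ι) : ℝ := ⟪a i, y⟫ - b i

lemma inner_sub_div_slack (a : ι → E) (b : ι → ℝ) {ω : E} {i : ι} (hs : slack a b ω i ≠ 0)
    (x : E) : ⟪a i, x - ω⟫ / slack a b ω i = slack a b x i / slack a b ω i - 1 := by
  rw [div_sub_one hs, inner_sub_right]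
  simp only [slack]
  ring

lemma norm_sub_sq_le_of_norm_le_one {x : E} (hx : ‖x‖ ≤ 1) (ω : E) :
    ‖x - ω‖ ^ 2 ≤ 1 - ‖ω‖ ^ 2 - 2 * ⟪ω, x - ω⟫ := by
  have hx2 : ‖x‖ ^ 2 ≤ 1 := pow_le_one₀ (norm_nonneg x) hx
  rw [norm_sub_sq_real, inner_sub_right, real_inner_self_eq_norm_sq, real_inner_comm]
  linarith

variable [Fintype ι]

noncomputable def hessianForm (a : ι → E) (b : ι → ℝ) (ω v : E) : ℝ :=
  (∑ i, ⟪a i, v⟫ ^ 2 / slack a b ω i ^ 2) + 4 * ⟪ω, v⟫ ^ 2 / (1 - ‖ω‖ ^ 2) ^ 2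
    + 2 * ‖v‖ ^ 2 / (1 - ‖ω‖ ^ 2)

lemma sum_sub_one_sq_le {u : ι → ℝ} (hu : ∀ i, 0 ≤ u i) :
    ∑ i, (u i - 1) ^ 2 ≤ (∑ i, u i) ^ 2 - 2 * ∑ i, u i + Fintype.card ι := by
  have hsq : ∑ i, u i ^ 2 ≤ (∑ i, u i) ^ 2 :=
    Finset.sum_sq_le_sq_sum_of_nonneg fun i _ => hu i
  have hexpand : ∑ i, (u i - 1) ^ 2 = ∑ i, u i ^ 2 - 2 * ∑ i, u i + Fintype.card ι := by
    simp only [sub_sq, one_pow, mul_one, Finset.sum_add_distrib, Finset.sum_sub_distrib,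
      ← Finset.mul_sum, Finset.sum_const, Finset.card_univ, nsmul_eq_mul, mul_one]
  linarith

section

variable (a : ι → E) (b : ι → ℝ) {ω : E}

lemma centre_eq_inner_sub (hA : 1 - ‖ω‖ ^ 2 ≠ 0) (hs : ∀ i, slack a b ω i ≠ 0)
    (hceq : ∑ i, (slack a b ω i)⁻¹ • a i = (2 / (1 - ‖ω‖ ^ 2)) • ω) (x : E) :
    (1 - ‖ω‖ ^ 2) * (∑ i, slack a b x i / slack a b ω i - Fintype.card ι) = 2 * ⟪ω, x - ω⟫ := by
  have hpair := congrArg (fun y => ⟪y, x - ω⟫) hceq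
  simp only [sum_inner, real_inner_smul_left, inv_mul_eq_div, inner_sub_div_slack a b (hs _),
    Finset.sum_sub_distrib, Finset.sum_const, Finset.card_univ, nsmul_eq_mul, mul_one] at hpair
  rw [hpair]
  field_simp

lemma hessianForm_sub_le (hω : ‖ω‖ < 1) (hs : ∀ i, 0 < slack a b ω i)
    (hceq : ∑ i, (slack a b ω i)⁻¹ • a i = (2 / (1 - ‖ω‖ ^ 2)) • ω)
    {x : E} (hx : ‖x‖ ≤ 1) (hxs : ∀ i, 0 ≤ slack a b x i) :
    hessianForm a b ω (x - ω) ≤ (Fintype.card ι + 1) * (Fintype.card ι + 2) := by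
  set A := 1 - ‖ω‖ ^ 2
  set u := fun i => slack a b x i / slack a b ω i
  set S := ∑ i, u i
  set m : ℝ := (Fintype.card ι : ℝ)
  have hA : 0 < A := by
    have : ‖ω‖ ^ 2 < 1 := pow_lt_one₀ (norm_nonneg ω) hω (by norm_num)
    linarith
  have hu : ∀ i, 0 ≤ u i := fun i => div_nonneg (hxs i) (hs i).le
  have hcentre : A * (S - m) = 2 * ⟪ω, x - ω⟫ :=
    centre_eq_inner_sub a b hA.ne' (fun i => (hs i).ne') hceq x
  have hlinear : ∑ i, ⟪a i, x - ω⟫ ^ 2 / slack a b ω i ^ 2 ≤ S ^ 2 - 2 * S + m := by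
    simp only [← div_pow, inner_sub_div_slack a b (hs _).ne']
    exact sum_sub_one_sq_le hu
  have hrank_one : 4 * ⟪ω, x - ω⟫ ^ 2 / A ^ 2 = (S - m) ^ 2 := by
    rw [show 4 * ⟪ω, x - ω⟫ ^ 2 = (A * (S - m)) ^ 2 by rw [hcentre]; ring]
    field_simp
  have hball : ‖x - ω‖ ^ 2 ≤ A * (1 - (S - m)) := by
    have := norm_sub_sq_le_of_norm_le_one hx ω
    linarith
  have hnorm_part : 2 * ‖x - ω‖ ^ 2 / A ≤ 2 * (1 - (S - m)) := by
    rw [div_le_iff₀ hA]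
    linarith
  have hS_le : S ≤ m + 1 := by
    nlinarith [sq_nonneg ‖x - ω‖]
  have hS_nonneg : 0 ≤ S := Finset.sum_nonneg fun i _ => hu i
  unfold hessianForm
  nlinarith [mul_nonneg hS_nonneg (sub_nonneg.2 hS_le)]

end

end AnalyticCentre

open AnalyticCentre in
theorem search_region_in_hessian_ellipsoid_general (n h : ℕ) (hh : 31 < h)
    (a : Fin h → EuclideanSpace ℝ (Fin n)) (b : Fin h → ℝ)
    (ω : EuclideanSpace ℝ (Fin n)) (hω : ‖ω‖ < 1)
    (hωi : ∀ i, b i < ⟪a i, ω⟫)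
    (hceq : ∑ i, (⟪a i, ω⟫ - b i)⁻¹ • a i = (2 / (1 - ‖ω‖ ^ 2)) • ω)
    (x : EuclideanSpace ℝ (Fin n)) (hx : ‖x‖ ≤ 1) (hxi : ∀ i, b i ≤ ⟪a i, x⟫) :
    (∑ i, ⟪a i, x - ω⟫ ^ 2 / (⟪a i, ω⟫ - b i) ^ 2)
      + 4 * ⟪ω, x - ω⟫ ^ 2 / (1 - ‖ω‖ ^ 2) ^ 2
      + 2 * ‖x - ω‖ ^ 2 / (1 - ‖ω‖ ^ 2) ≤ 14 * (h : ℝ) ^ 2 := by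
  have hbound := hessianForm_sub_le a b hω (fun i => sub_pos.2 (hωi i)) hceq hx
    (fun i => sub_nonneg.2 (hxi i))
  rw [Fintype.card_fin] at hbound
  have hh' : (1 : ℝ) ≤ h := by exact_mod_cast (by omega : 1 ≤ h)
  calc _ = hessianForm a b ω (x - ω) := rfl
    _ ≤ (h + 1) * (h + 2) := hbound
    _ ≤ 14 * (h : ℝ) ^ 2 := by nlinarith

/-- For `h > 31` cuts with negative offsets, the search region `P` is contained in the
Hessian ellipsoid `E(∇²F(ω), ω, √14·h)` about the analytic centre `ω`: every `x ∈ P`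
satisfies `(x−ω)ᵀ∇²F(ω)(x−ω) ≤ 14·h²`. -/
theorem search_region_in_hessian_ellipsoid (n h : ℕ) (hh : 31 < h)
    (a : Fin h → EuclideanSpace ℝ (Fin n)) (b : Fin h → ℝ) (hb : ∀ i, b i < 0)
    (ω : EuclideanSpace ℝ (Fin n)) (hω : ‖ω‖ < 1)
    (hωi : ∀ i, b i < ⟪a i, ω⟫)
    (hceq : ∑ i, (⟪a i, ω⟫ - b i)⁻¹ • a i = (2 / (1 - ‖ω‖ ^ 2)) • ω)
    (x : EuclideanSpace ℝ (Fin n)) (hx : ‖x‖ ≤ 1) (hxi : ∀ i, b i ≤ ⟪a i, x⟫) :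
    (∑ i, ⟪a i, x - ω⟫ ^ 2 / (⟪a i, ω⟫ - b i) ^ 2)
      + 4 * ⟪ω, x - ω⟫ ^ 2 / (1 - ‖ω‖ ^ 2) ^ 2
      + 2 * ‖x - ω‖ ^ 2 / (1 - ‖ω‖ ^ 2) ≤ 14 * (h : ℝ) ^ 2 :=
  search_region_in_hessian_ellipsoid_general n h hh a b ω hω hωi hceq x hx hxi
end

section
/- Let a₁, …, a_h ∈ ℝⁿ and b₁, …, b_h ∈ ℝ, and suppose ω ∈ ℝⁿ satisfies ‖ω‖ < 1, ⟨a_i, ω⟩ > b_i for all i, and the analytic-centre equation Σ_{i=1}^{h} a_i/(⟨a_i, ω⟩ − b_i) = 2ω/(1 − ‖ω‖²). Then for every index j and all x, y ∈ ℝⁿ with ‖x‖ ≤ 1, ‖y‖ ≤ 1 and ⟨a_i, x⟩ ≥ b_i, ⟨a_i, y⟩ ≥ b_i for all i, one has ⟨a_j, x − y⟩ ≤ (⟨a_j, ω⟩ − b_j)·(h + 4/(1 − ‖ω‖²)). If moreover b_i < 0 for all i, then ⟨a_j, x − y⟩ ≤ (⟨a_j, ω⟩ − b_j)·(3h + 4).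 In particular, the width of the search region P in the direction a_j is at most (⟨a_j, ω⟩ − b_j)(3h + 4). -/
open scoped RealInnerProductSpace

/-- Width bound for the search region: for any `x, y` in the region `P` and any index
`j`, `⟨a_j, x − y⟩ ≤ (⟨a_j, ω⟩ − b_j)(h + 4/(1 − ‖ω‖²))`; if moreover all offsets are
negative then `⟨a_j, x − y⟩ ≤ (⟨a_j, ω⟩ − b_j)(3h + 4)`. -/
theorem width_bound (n h : ℕ)
    (a : Fin h → EuclideanSpace ℝ (Fin n)) (b : Fin h → ℝ)
    (ω : EuclideanSpace ℝ (Fin n)) (hω : ‖ω‖ < 1)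
    (hωi : ∀ i, b i < ⟪a i, ω⟫)
    (hceq : ∑ i, (⟪a i, ω⟫ - b i)⁻¹ • a i = (2 / (1 - ‖ω‖ ^ 2)) • ω)
    (j : Fin h) (x y : EuclideanSpace ℝ (Fin n))
    (hx : ‖x‖ ≤ 1) (hy : ‖y‖ ≤ 1)
    (hxi : ∀ i, b i ≤ ⟪a i, x⟫) (hyi : ∀ i, b i ≤ ⟪a i, y⟫) :
    ⟪a j, x - y⟫ ≤ (⟪a j, ω⟫ - b j) * ((h : ℝ) + 4 / (1 - ‖ω‖ ^ 2)) ∧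
    ((∀ i, b i < 0) →
      ⟪a j, x - y⟫ ≤ (⟪a j, ω⟫ - b j) * (3 * (h : ℝ) + 4)) := by
  have hd : ∀ i, (0:ℝ) < ⟪a i, ω⟫ - b i := fun i => sub_pos.2 (hωi i)
  have ht0 : (0:ℝ) ≤ ‖ω‖ ^ 2 := sq_nonneg _
  have ht1 : ‖ω‖ ^ 2 < 1 := by nlinarith [norm_nonneg ω]
  have h1t : (0:ℝ) < 1 - ‖ω‖ ^ 2 := by linarith
  -- key equation, obtained by pairing the centre equation with x − ω
  have key : ∑ i, (⟪a i, ω⟫ - b i)⁻¹ * ⟪a i, x - ω⟫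
      = (2 / (1 - ‖ω‖ ^ 2)) * ⟪ω, x - ω⟫ := by
    have := congrArg (fun w : EuclideanSpace ℝ (Fin n) => (⟪w, x - ω⟫ : ℝ)) hceq
    simp only [sum_inner, real_inner_smul_left] at this
    exact this
  have hωω : (⟪ω, ω⟫:ℝ) = ‖ω‖ ^ 2 := real_inner_self_eq_norm_sq ω
  have hwx : ⟪ω, x⟫ ≤ 1 := by
    have h1 := real_inner_le_norm ω x
    nlinarith [norm_nonneg ω, norm_nonneg x]
  have hrhs : (2 / (1 - ‖ω‖ ^ 2)) * ⟪ω, x - ω⟫ ≤ 2 := by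
    have hsub : (⟪ω, x - ω⟫:ℝ) = ⟪ω, x⟫ - ‖ω‖ ^ 2 := by
      rw [inner_sub_right, hωω]
    rw [hsub, div_mul_eq_mul_div, div_le_iff₀ h1t]
    nlinarith
  -- each term of the sum is at least −1
  have hterm : ∀ i, (-1:ℝ) ≤ (⟪a i, ω⟫ - b i)⁻¹ * ⟪a i, x - ω⟫ := by
    intro i
    have h1 : (⟪a i, x - ω⟫:ℝ) = (⟪a i, x⟫ - b i) - (⟪a i, ω⟫ - b i) := by
      rw [inner_sub_right]; ring
    have hm : -(⟪a i, ω⟫ - b i) ≤ ⟪a i, x - ω⟫ := by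
      rw [h1]; have := hxi i; linarith
    have h2 := mul_le_mul_of_nonneg_left hm (le_of_lt (inv_pos.2 (hd i)))
    have h3 : (⟪a i, ω⟫ - b i)⁻¹ * -(⟪a i, ω⟫ - b i) = -1 := by
      rw [mul_neg, inv_mul_cancel₀ (ne_of_gt (hd i))]
    linarith [h3 ▸ h2]
  -- split off the j-th term
  have hsplit := Finset.add_sum_erase Finset.univ
      (fun i => (⟪a i, ω⟫ - b i)⁻¹ * ⟪a i, x - ω⟫) (Finset.mem_univ j)
  have hcard : (((Finset.univ : Finset (Fin h)).erase j).card : ℝ) ≤ h := by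
    have h1 := Finset.card_erase_le (s := (Finset.univ : Finset (Fin h))) (a := j)
    have h2 : (Finset.univ : Finset (Fin h)).card = h := by simp
    exact_mod_cast h2 ▸ h1
  have hrest : -((((Finset.univ : Finset (Fin h)).erase j).card : ℝ))
      ≤ ∑ i ∈ (Finset.univ : Finset (Fin h)).erase j,
        (⟪a i, ω⟫ - b i)⁻¹ * ⟪a i, x - ω⟫ := by
    have := Finset.sum_le_sum (f := fun _ : Fin h => (-1:ℝ))
      (g := fun i => (⟪a i, ω⟫ - b i)⁻¹ * ⟪a i, x - ω⟫)
      (s := (Finset.univ : Finset (Fin h)).erase j) (fun i _ => hterm i)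
    simpa using this
  have htermj : (⟪a j, ω⟫ - b j)⁻¹ * ⟪a j, x - ω⟫ ≤ (h:ℝ) + 2 := by
    have := key ▸ hsplit
    linarith
  have hxω : ⟪a j, x - ω⟫ ≤ (⟪a j, ω⟫ - b j) * ((h:ℝ) + 2) := by
    have h2 := mul_le_mul_of_nonneg_left htermj (le_of_lt (hd j))
    have h3 : (⟪a j, ω⟫ - b j) * ((⟪a j, ω⟫ - b j)⁻¹ * ⟪a j, x - ω⟫)
        = ⟪a j, x - ω⟫ := by
      rw [← mul_assoc, mul_inv_cancel₀ (ne_of_gt (hd j)), one_mul]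
    linarith [h3 ▸ h2]
  have hfin : ⟪a j, x - y⟫ ≤ (⟪a j, ω⟫ - b j) * ((h:ℝ) + 3) := by
    have h2 : (⟪a j, x - y⟫:ℝ) = ⟪a j, x - ω⟫ + (⟪a j, ω⟫ - ⟪a j, y⟫) := by
      rw [inner_sub_right, inner_sub_right]; ring
    have h4 := hyi j
    nlinarith [hd j]
  constructor
  · have h4 : (3:ℝ) ≤ 4 / (1 - ‖ω‖ ^ 2) := by
      rw [le_div_iff₀ h1t]; nlinarith
    have := mul_le_mul_of_nonneg_left (show (h:ℝ) + 3 ≤ (h:ℝ) + 4 / (1 - ‖ω‖ ^ 2) by linarith)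
      (le_of_lt (hd j))
    linarith
  · intro _
    have hh : (0:ℝ) ≤ (h:ℝ) := Nat.cast_nonneg h
    have := mul_le_mul_of_nonneg_left
      (show (h:ℝ) + 3 ≤ 3 * (h:ℝ) + 4 by linarith) (le_of_lt (hd j))
    linarith
end

section
/- Let δ̃ > 0 and ζ > 0, let a₁, …, a_h ∈ ℝⁿ be unit vectors, and let m ∈ ℝⁿ be a unit vector with ⟨m, a_i⟩ ≥ δ̃ for every i. Let ω = Σ_{i=1}^{h} η_i a_i with η_i ≥ 0 for all i and ω ≠ 0, and let z ∈ ℝⁿ, z ≠ 0, satisfy ‖z − ω‖ < ζ/√2. If ζ < (δ̃/(1 + δ̃)) · ‖z‖/√2, then ⟨m, z/‖z‖⟩ > δ̃/2. -/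
open scoped RealInnerProductSpace

/-- If every cut normal `aᵢ` satisfies `⟨m, aᵢ⟩ ≥ δ̃`, the analytic centre `ω` is a
nonnegative combination of the `aᵢ`, and `z` approximates `ω` with `‖z − ω‖ < ζ/√2`
where `ζ < (δ̃/(1+δ̃))·‖z‖/√2`, then the normalised test vector `c = z/‖z‖` satisfies
`⟨m, c⟩ > δ̃/2`. -/
theorem approx_centre_inner_bound (n h : ℕ) (δ ζ : ℝ) (hδ : 0 < δ) (hζ : 0 < ζ)
    (a : Fin h → EuclideanSpace ℝ (Fin n)) (ha : ∀ i, ‖a i‖ = 1)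
    (m : EuclideanSpace ℝ (Fin n)) (hm : ‖m‖ = 1)
    (hma : ∀ i, δ ≤ ⟪m, a i⟫)
    (η : Fin h → ℝ) (hη : ∀ i, 0 ≤ η i)
    (ω : EuclideanSpace ℝ (Fin n)) (hωdef : ω = ∑ i, η i • a i) (hω0 : ω ≠ 0)
    (z : EuclideanSpace ℝ (Fin n)) (hz0 : z ≠ 0)
    (hzω : ‖z - ω‖ < ζ / Real.sqrt 2)
    (hζb : ζ < (δ / (1 + δ)) * ‖z‖ / Real.sqrt 2) :
    δ / 2 < ⟪m, ‖z‖⁻¹ • z⟫ := by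
  have hz : (0:ℝ) < ‖z‖ := norm_pos_iff.mpr hz0
  have hsum : ‖ω‖ ≤ ∑ i, η i := by
    calc ‖ω‖ ≤ ∑ i, ‖η i • a i‖ := by rw [hωdef]; exact norm_sum_le _ _
    _ = ∑ i, η i := by
        refine Finset.sum_congr rfl fun i _ => ?_
        rw [norm_smul, ha i, mul_one, Real.norm_eq_abs, abs_of_nonneg (hη i)]
  have hinner : δ * ∑ i, η i ≤ ⟪m, ω⟫ := by
    rw [hωdef, inner_sum, Finset.mul_sum]
    refine Finset.sum_le_sum fun i _ => ?_
    rw [real_inner_smul_right, mul_comm δ (η i)]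
    exact mul_le_mul_of_nonneg_left (hma i) (hη i)
  have hδω : δ * ‖ω‖ ≤ ⟪m, ω⟫ :=
    le_trans (mul_le_mul_of_nonneg_left hsum hδ.le) hinner
  have hdiff : |⟪m, z - ω⟫| ≤ ‖z - ω‖ := by
    have := abs_real_inner_le_norm m (z - ω)
    rwa [hm, one_mul] at this
  have hsplit : ⟪m, z⟫ = ⟪m, ω⟫ + ⟪m, z - ω⟫ := by
    rw [inner_sub_right]; ring
  have hnorm : ‖z‖ - ‖z - ω‖ ≤ ‖ω‖ := by
    have := norm_sub_norm_le z ω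
    linarith [this]
  have h2 : (0:ℝ) < Real.sqrt 2 := by positivity
  have hsq : Real.sqrt 2 * Real.sqrt 2 = 2 := Real.mul_self_sqrt (by norm_num)
  have hd : (1 + δ) * ‖z - ω‖ < δ * ‖z‖ / 2 := by
    have h1 : ‖z - ω‖ < (δ / (1 + δ)) * ‖z‖ / 2 := by
      have := (div_lt_div_iff_of_pos_right h2).mpr hζb
      calc ‖z - ω‖ < ζ / Real.sqrt 2 := hzω
        _ < (δ / (1 + δ)) * ‖z‖ / Real.sqrt 2 / Real.sqrt 2 := this
        _ = (δ / (1 + δ)) * ‖z‖ / 2 := by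
            rw [div_div, hsq]
    have hδ1 : (0:ℝ) < 1 + δ := by linarith
    calc (1 + δ) * ‖z - ω‖ < (1 + δ) * ((δ / (1 + δ)) * ‖z‖ / 2) :=
          mul_lt_mul_of_pos_left h1 hδ1
      _ = δ * ‖z‖ / 2 := by field_simp
  have hmz : δ * ‖z‖ / 2 < ⟪m, z⟫ := by
    have h3 : -‖z - ω‖ ≤ ⟪m, z - ω⟫ := neg_le_of_abs_le hdiff
    nlinarith [hdiff, hnorm, hδω, hsplit]
  rw [real_inner_smul_right]
  rw [show δ / 2 = ‖z‖⁻¹ * (δ * ‖z‖ / 2) by field_simp]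
  exact mul_lt_mul_of_pos_left hmz (inv_pos.mpr hz)
end

section
/- Let M, N ≥ 2 and let p ≥ 1 be an integer. Let α ∈ ℂ^M and β ∈ ℂ^N be unit vectors, and let α̃, β̃ be p-bit truncations of α, β. Then ‖(α αᴴ) ⊗ (β βᴴ) − (α̃ α̃ᴴ) ⊗ (β̃ β̃ᴴ)‖₂ ≤ M·N · 2^{−(p−6.5)}. -/
open Matrix
open scoped Kronecker

noncomputable section

/-!
Every entry of `outer α ⊗ₖ outer β` is a product `α i · conj (α j) · β k · conj (β l)` of
four numbers of modulus at most one, and truncation does not increase moduli while it moves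
each number by less than `2 · 2⁻ᵖ`. Telescoping the product therefore moves each entry by at
most `8 · 2⁻ᵖ`, and summing the squares over the `(MN)²` entries bounds the Frobenius norm by
`MN · 8 · 2⁻ᵖ ≤ MN · 2^{6.5 - p}`.
-/

theorem norm_mul_sub_mul_le_of_norm_le_one {R : Type*} [SeminormedRing R] {a a' b b' : R}
    (ha' : ‖a'‖ ≤ 1) (hb : ‖b‖ ≤ 1) : ‖a * b - a' * b'‖ ≤ ‖a - a'‖ + ‖b - b'‖ := by
  have hsplit : a * b - a' * b' = (a - a') * b + a' * (b - b') := by noncomm_ring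
  rw [hsplit]
  calc ‖(a - a') * b + a' * (b - b')‖
      ≤ ‖a - a'‖ * ‖b‖ + ‖a'‖ * ‖b - b'‖ :=
        (norm_add_le _ _).trans (add_le_add (norm_mul_le _ _) (norm_mul_le _ _))
    _ ≤ ‖a - a'‖ * 1 + 1 * ‖b - b'‖ := by gcongr
    _ = ‖a - a'‖ + ‖b - b'‖ := by ring

theorem IsTruncC.norm_le_s19 {p : ℕ} {z z' : ℂ} (h : IsTruncC p z z') : ‖z'‖ ≤ ‖z‖ := by
  obtain ⟨⟨hre, -⟩, ⟨him, -⟩⟩ := h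
  have hre' : z'.re * z'.re ≤ z.re * z.re := by simpa only [← sq] using sq_le_sq.mpr hre
  have him' : z'.im * z'.im ≤ z.im * z.im := by simpa only [← sq] using sq_le_sq.mpr him
  rw [Complex.norm_def, Complex.norm_def, Complex.normSq_apply, Complex.normSq_apply]
  exact Real.sqrt_le_sqrt (add_le_add hre' him')

theorem IsTruncC.norm_sub_le {p : ℕ} {z z' : ℂ} (h : IsTruncC p z z') :
    ‖z - z'‖ ≤ 2 * (2 : ℝ) ^ (-(p : ℤ)) := by
  obtain ⟨⟨-, hre⟩, ⟨-, him⟩⟩ := h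
  have := Complex.norm_le_abs_re_add_abs_im (z - z')
  rw [Complex.sub_re, Complex.sub_im] at this
  linarith

theorem isUnitVec.norm_le_one {d : ℕ} {x : Fin d → ℂ} (hx : isUnitVec x) (i : Fin d) :
    ‖x i‖ ≤ 1 := by
  have hsq : ‖x i‖ ^ 2 ≤ 1 :=
    hx ▸ Finset.single_le_sum (f := fun j => ‖x j‖ ^ 2) (fun j _ => by positivity)
      (Finset.mem_univ i)
  exact pow_le_one_iff_of_nonneg (norm_nonneg _) two_ne_zero |>.mp hsq

theorem IsTruncVec.norm_le_one {d p : ℕ} {x x' : Fin d → ℂ} (h : IsTruncVec p x x')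
    (hx : isUnitVec x) (i : Fin d) : ‖x' i‖ ≤ 1 :=
  (h i).norm_le_s19.trans (hx.norm_le_one i)

theorem outer_apply {d : ℕ} (x : Fin d → ℂ) (i j : Fin d) :
    outer x i j = x i * star (x j) :=
  vecMulVec_apply x (star x) i j

theorem norm_outer_apply_le_one {d : ℕ} {x : Fin d → ℂ} (hx : ∀ i, ‖x i‖ ≤ 1) (i j : Fin d) :
    ‖outer x i j‖ ≤ 1 := by
  rw [outer_apply, norm_mul, norm_star]
  exact mul_le_one₀ (hx i) (norm_nonneg _) (hx j)

theorem norm_outer_sub_outer_apply_le {d : ℕ} {x x' : Fin d → ℂ} (hx : ∀ i, ‖x i‖ ≤ 1)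
    (hx' : ∀ i, ‖x' i‖ ≤ 1) (i j : Fin d) :
    ‖(outer x - outer x') i j‖ ≤ ‖x i - x' i‖ + ‖x j - x' j‖ := by
  rw [Matrix.sub_apply, outer_apply, outer_apply]
  calc ‖x i * star (x j) - x' i * star (x' j)‖
      ≤ ‖x i - x' i‖ + ‖star (x j) - star (x' j)‖ :=
        norm_mul_sub_mul_le_of_norm_le_one (hx' i) (by rw [norm_star]; exact hx j)
    _ = ‖x i - x' i‖ + ‖x j - x' j‖ := by rw [← star_sub, norm_star]

theorem norm_kronecker_sub_kronecker_apply_le {R m n : Type*} [SeminormedRing R]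
    {A A' : Matrix m m R} {B B' : Matrix n n R} (hA' : ∀ i j, ‖A' i j‖ ≤ 1)
    (hB : ∀ i j, ‖B i j‖ ≤ 1) (i j : m × n) :
    ‖(A ⊗ₖ B - A' ⊗ₖ B') i j‖ ≤ ‖(A - A') i.1 j.1‖ + ‖(B - B') i.2 j.2‖ := by
  rw [Matrix.sub_apply, kroneckerMap_apply, kroneckerMap_apply, Matrix.sub_apply,
    Matrix.sub_apply]
  exact norm_mul_sub_mul_le_of_norm_le_one (hA' _ _) (hB _ _)

theorem frob_le_card_mul {m : Type*} [Fintype m] {X : Matrix m m ℂ} {c : ℝ}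
    (hX : ∀ i j, ‖X i j‖ ≤ c) : frob X ≤ Fintype.card m * c := by
  rcases isEmpty_or_nonempty m with _ | ⟨⟨i₀⟩⟩
  · simp [frob]
  have hc : 0 ≤ c := (norm_nonneg _).trans (hX i₀ i₀)
  have hsum : ∑ i, ∑ j, ‖X i j‖ ^ 2 ≤ (Fintype.card m * c) ^ 2 :=
    calc ∑ i, ∑ j, ‖X i j‖ ^ 2
        ≤ ∑ _i : m, ∑ _j : m, c ^ 2 := by gcongr with i _ j; exact hX i j
      _ = (Fintype.card m * c) ^ 2 := by
        simp only [Finset.sum_const, Finset.card_univ, nsmul_eq_mul]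
        ring
  unfold frob
  exact Real.sqrt_le_iff.mpr ⟨by positivity, hsum⟩

theorem eight_mul_two_zpow_neg_le (p : ℕ) :
    8 * (2 : ℝ) ^ (-(p : ℤ)) ≤ (2 : ℝ) ^ ((6.5 : ℝ) - p) := by
  have h8 : 8 * (2 : ℝ) ^ (-(p : ℤ)) = (2 : ℝ) ^ ((3 : ℝ) - p) := by
    rw [Real.rpow_sub two_pos, _root_.zpow_neg, zpow_natCast, Real.rpow_natCast]
    norm_num [div_eq_mul_inv]
  rw [h8]
  exact Real.rpow_le_rpow_of_exponent_le one_le_two (by norm_num)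

theorem pure_product_truncation_bound_general (M N p : ℕ)
    (α α' : Fin M → ℂ) (β β' : Fin N → ℂ)
    (hα : isUnitVec α) (hβ : isUnitVec β)
    (htα : IsTruncVec p α α') (htβ : IsTruncVec p β β') :
    frob (outer α ⊗ₖ outer β - outer α' ⊗ₖ outer β')
      ≤ (M : ℝ) * (N : ℝ) * (2 : ℝ) ^ ((6.5 : ℝ) - (p : ℝ)) := by
  have hentry i j : ‖(outer α ⊗ₖ outer β - outer α' ⊗ₖ outer β') i j‖
      ≤ 8 * (2 : ℝ) ^ (-(p : ℤ)) := by
    refine (norm_kronecker_sub_kronecker_apply_le (norm_outer_apply_le_one (htα.norm_le_one hα))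
      (norm_outer_apply_le_one hβ.norm_le_one) i j).trans ?_
    have := norm_outer_sub_outer_apply_le hα.norm_le_one (htα.norm_le_one hα) i.1 j.1
    have := norm_outer_sub_outer_apply_le hβ.norm_le_one (htβ.norm_le_one hβ) i.2 j.2
    linarith [(htα i.1).norm_sub_le, (htα j.1).norm_sub_le, (htβ i.2).norm_sub_le,
      (htβ j.2).norm_sub_le]
  calc frob (outer α ⊗ₖ outer β - outer α' ⊗ₖ outer β')
      ≤ Fintype.card (Fin M × Fin N) * (8 * (2 : ℝ) ^ (-(p : ℤ))) := frob_le_card_mul hentry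
    _ ≤ (M : ℝ) * (N : ℝ) * (2 : ℝ) ^ ((6.5 : ℝ) - (p : ℝ)) := by
      rw [Fintype.card_prod, Fintype.card_fin, Fintype.card_fin, Nat.cast_mul]
      gcongr
      exact eight_mul_two_zpow_neg_le p

/-- Truncating a pure product state to `p` bits moves it by at most `MN·2^{−(p−6.5)}` in
Frobenius norm. -/
theorem pure_product_truncation_bound (M N p : ℕ) (hM : 2 ≤ M) (hN : 2 ≤ N) (hp : 1 ≤ p)
    (α α' : Fin M → ℂ) (β β' : Fin N → ℂ)
    (hα : isUnitVec α) (hβ : isUnitVec β)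
    (htα : IsTruncVec p α α') (htβ : IsTruncVec p β β') :
    frob (outer α ⊗ₖ outer β - outer α' ⊗ₖ outer β')
      ≤ (M : ℝ) * (N : ℝ) * (2 : ℝ) ^ ((6.5 : ℝ) - (p : ℝ)) :=
  pure_product_truncation_bound_general M N p α α' β β' hα hβ htα htβ

end
end
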